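/- Restriction preserves regret bound: for any policy ξ on the augmented MDP with restriction ξ̲ to the original MDP, the regret of ξ̲ in the original MDP is at most the regret of ξ in the augmented MDP: V*(d₀) − V^{ξ̲}(d₀) ≤ V̄*(d₀) − V̄^{ξ}(d₀). -/

import Mathlib

/-!
Every Bellman operator involved (optimal or policy, original or augmented) is monotone and
satisfies `T (V + c) ≤ T V + γ c`, so by Blackwell's argument a subsolution `V ≤ T V` lies below
any supersolution `T W ≤ W`. Once the absorbing state is known to have value `0`, the augmented
values at real states are fixed points of operators on `X → ℝ`. Since the original values lie in
`[0, 1]`, the original optimal value is also a fixed point of the augmented optimal operator, so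
the two optimal values agree; and the value of the restriction `ξr` is a supersolution of the
Bellman operator of `ξ`, because moving the mass of `a⁺` to real actions can only increase a
`[0, 1]`-valued lookahead.
-/

open scoped ENNReal
open Classical

/-- Expectation of a real-valued function under a probability mass function. -/
noncomputable def pexp {σ : Type*} (p : PMF σ) (φ : σ → ℝ) : ℝ :=
  ∑' s, (p s).toReal * φ s

/-- Transition kernel of the action-augmented MDP: states `Option X` (with `none` the
absorbing state `s⁺`), actions `Option A` (with `none` the fictitious action `a⁺`).
Taking `a⁺` always transitions to `s⁺`; real actions follow the original dynamics;
`s⁺` is absorbing. -/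
noncomputable def augP {X A : Type*} (P : X → A → PMF X) :
    Option X → Option A → PMF (Option X)
  | some x, some a => (P x a).map some
  | _, _ => PMF.pure none

/-- Reward of the action-augmented MDP: reward `1` exactly when taking the fictitious
action `a⁺` at a goal state; all other rewards are `0`. -/
noncomputable def augR {X A : Type*} (G : Set X) : Option X → Option A → ℝ
  | some x, none => if x ∈ G then 1 else 0
  | _, _ => 0

/-- Extension `π̄` of a policy `π` to the augmented MDP: play the fictitious action `a⁺`
exactly on goal states, otherwise follow `π`. -/
noncomputable def extPi {X A : Type*} (G : Set X) (π : X → PMF A) :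
    Option X → PMF (Option A)
  | some x => if x ∈ G then PMF.pure none else (π x).map some
  | none => PMF.pure none

section Pexp

variable {σ : Type*}

lemma pexp_pure (s : σ) (φ : σ → ℝ) : pexp (PMF.pure s) φ = φ s := by
  rw [pexp, tsum_eq_single s fun t ht => by simp [PMF.pure_apply, ht]]
  simp

lemma pexp_const (p : PMF σ) (c : ℝ) : pexp p (fun _ => c) = c := by
  rw [pexp, tsum_mul_right, ← ENNReal.tsum_toReal_eq p.apply_ne_top, p.tsum_coe,
    ENNReal.toReal_one, one_mul]

variable [Fintype σ]

lemma pexp_eq_sum (p : PMF σ) (φ : σ → ℝ) : pexp p φ = ∑ s, (p s).toReal * φ s :=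
  tsum_fintype _

lemma pexp_add_const (p : PMF σ) (φ : σ → ℝ) (c : ℝ) :
    pexp p (fun s => φ s + c) = pexp p φ + c := by
  have h := pexp_const p c
  simp only [pexp_eq_sum] at h ⊢
  simp only [mul_add, Finset.sum_add_distrib, h]

lemma pexp_mono (p : PMF σ) {φ ψ : σ → ℝ} (h : φ ≤ ψ) : pexp p φ ≤ pexp p ψ := by
  simp only [pexp_eq_sum]
  exact Finset.sum_le_sum fun s _ => mul_le_mul_of_nonneg_left (h s) ENNReal.toReal_nonneg

lemma pexp_le (p : PMF σ) {φ : σ → ℝ} {c : ℝ} (h : ∀ s, φ s ≤ c) : pexp p φ ≤ c :=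
  (pexp_mono p h).trans (pexp_const p c).le

lemma le_pexp (p : PMF σ) {φ : σ → ℝ} {c : ℝ} (h : ∀ s, c ≤ φ s) : c ≤ pexp p φ :=
  (pexp_const p c).ge.trans (pexp_mono p h)

lemma pexp_map_some (p : PMF σ) (φ : Option σ → ℝ) :
    pexp (p.map some) φ = pexp p (fun s => φ (some s)) := by
  simp [pexp_eq_sum, Fintype.sum_option, PMF.map_apply]

end Pexp

lemma pexp_le_pexp_of_restrict {A : Type*} [Fintype A] [Nonempty A] {π : PMF (Option A)}
    {πr : PMF A} (hres : ∀ a, πr a = π (some a) + π none / (Fintype.card A : ℝ≥0∞))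
    {f : Option A → ℝ} {g : A → ℝ} (hnone : ∀ a, f none ≤ g a) (hsome : ∀ a, f (some a) ≤ g a) :
    pexp π f ≤ pexp πr g := by
  have hcard : (0 : ℝ) < Fintype.card A := Nat.cast_pos.2 Fintype.card_pos
  have hres' (a : A) : (πr a).toReal = (π (some a)).toReal + (π none).toReal / Fintype.card A := by
    rw [hres, ENNReal.toReal_add (π.apply_ne_top _)
      (ENNReal.div_ne_top (π.apply_ne_top _) (by simp)),
      ENNReal.toReal_div, ENNReal.toReal_natCast]
  have hmean : f none ≤ (∑ a, g a) / Fintype.card A := by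
    rw [le_div_iff₀ hcard, mul_comm, ← nsmul_eq_mul, ← Finset.card_univ, ← Finset.sum_const]
    exact Finset.sum_le_sum fun a _ => hnone a
  calc pexp π f
      = (π none).toReal * f none + ∑ a, (π (some a)).toReal * f (some a) := by
        rw [pexp_eq_sum, Fintype.sum_option]
    _ ≤ (π none).toReal * ((∑ a, g a) / Fintype.card A) + ∑ a, (π (some a)).toReal * g a := by
        gcongr with a
        exact hsome a
    _ = pexp πr g := by
        simp only [pexp_eq_sum, hres', add_mul, Finset.sum_add_distrib, div_eq_mul_inv,
          ← Finset.mul_sum]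
        ring

/-- Blackwell's sufficient conditions for `T` to be a `γ`-contraction in the sup norm. -/
def IsBlackwell {ι κ : Type*} (γ : ℝ) (T : (ι → ℝ) → κ → ℝ) : Prop :=
  Monotone T ∧ ∀ V c, 0 ≤ c → ∀ k, T (fun i => V i + c) k ≤ T V k + γ * c

noncomputable def optBellman {ι κ B : Type*} (q : B → (ι → ℝ) → κ → ℝ) (V : ι → ℝ) (k : κ) : ℝ :=
  ⨆ b, q b V k

noncomputable def polBellman {ι κ B : Type*} (π : κ → PMF B) (q : B → (ι → ℝ) → κ → ℝ)
    (V : ι → ℝ) (k : κ) : ℝ :=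
  pexp (π k) (fun b => q b V k)

lemma le_optBellman {ι κ B : Type*} [Finite B] (q : B → (ι → ℝ) → κ → ℝ) (b : B) (V : ι → ℝ)
    (k : κ) : q b V k ≤ optBellman q V k :=
  le_ciSup (f := fun b => q b V k) (Finite.bddAbove_range _) b

namespace IsBlackwell

variable {ι κ B : Type*} {γ : ℝ}

theorem comparison [Finite ι] {T : (ι → ℝ) → ι → ℝ} (hT : IsBlackwell γ T) (hγ : γ < 1)
    {V W : ι → ℝ} (hV : V ≤ T V) (hW : T W ≤ W) : V ≤ W := by
  intro i
  have : Nonempty ι := ⟨i⟩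
  obtain ⟨j, hj⟩ := Finite.exists_max fun i => V i - W i
  set K := max 0 (V j - W j)
  have hVK : V ≤ fun i => W i + K := fun i => by linarith [hj i, le_max_right 0 (V j - W j)]
  have hstep : V j - W j ≤ γ * K := by
    linarith [hV j, hT.1 hVK j, hT.2 W K (le_max_left _ _) j, hW j]
  have hK : V j - W j ≤ 0 := by
    by_contra! hpos
    rw [show K = V j - W j from max_eq_right hpos.le] at hstep
    nlinarith
  linarith [hj i]

theorem optBellman [Finite B] [Nonempty B] {q : B → (ι → ℝ) → κ → ℝ}
    (hq : ∀ b, IsBlackwell γ (q b)) : IsBlackwell γ (optBellman q) := by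
  refine ⟨fun V W hVW k => ?_, fun V c hc k => ?_⟩
  · exact ciSup_mono (Finite.bddAbove_range _) fun b => (hq b).1 hVW k
  · exact ciSup_le fun b => ((hq b).2 V c hc k).trans (add_le_add_left (le_optBellman q b V k) _)

theorem polBellman [Fintype B] (π : κ → PMF B) {q : B → (ι → ℝ) → κ → ℝ}
    (hq : ∀ b, IsBlackwell γ (q b)) : IsBlackwell γ (polBellman π q) := by
  refine ⟨fun V W hVW k => pexp_mono _ fun b => (hq b).1 hVW k, fun V c hc k => ?_⟩
  calc pexp (π k) (fun b => q b (fun i => V i + c) k)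
      ≤ pexp (π k) (fun b => q b V k + γ * c) := pexp_mono _ fun b => (hq b).2 V c hc k
    _ = pexp (π k) (fun b => q b V k) + γ * c := pexp_add_const _ _ _

end IsBlackwell

section GoalMDP

variable {X A : Type*} {G : Set X} {P : X → A → PMF X} {γ : ℝ}

variable (G P γ) in
noncomputable def lookahead (a : A) (V : X → ℝ) (x : X) : ℝ :=
  if x ∈ G then 1 else γ * pexp (P x a) V

variable (G P γ) in
/-- The lookahead of the augmented MDP at a real state `some x`, given that the absorbing state
has value `0`; `V` is the value on real states. -/
noncomputable def augLookahead : Option A → (X → ℝ) → X → ℝ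
  | none, _, x => if x ∈ G then 1 else 0
  | some a, V, x => γ * pexp (P x a) V

lemma lookahead_eq_augLookahead (a : A) (V : X → ℝ) (x : X) :
    lookahead G P γ a V x = augLookahead G P γ (if x ∈ G then none else some a) V x := by
  unfold lookahead
  split_ifs with hx <;> simp [augLookahead, hx]

variable [Fintype X]

variable (G P) in
lemma isBlackwell_lookahead (hγ0 : 0 ≤ γ) (a : A) : IsBlackwell γ (lookahead G P γ a) := by
  refine ⟨fun V W hVW x => ?_, fun V c hc x => ?_⟩
  · unfold lookahead
    split_ifs
    · rfl
    · exact mul_le_mul_of_nonneg_left (pexp_mono _ hVW) hγ0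
  · unfold lookahead
    split_ifs
    · linarith [mul_nonneg hγ0 hc]
    · rw [pexp_add_const, mul_add]

variable (G P) in
lemma isBlackwell_augLookahead (hγ0 : 0 ≤ γ) : ∀ oa : Option A,
    IsBlackwell γ (augLookahead G P γ oa)
  | none => ⟨fun _ _ _ _ => le_rfl, fun _ _ hc _ => le_add_of_nonneg_right (mul_nonneg hγ0 hc)⟩
  | some _ => ⟨fun _ _ hVW _ => mul_le_mul_of_nonneg_left (pexp_mono _ hVW) hγ0,
      fun V c _ x => by simp only [augLookahead, pexp_add_const, mul_add, le_refl]⟩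

lemma augLookahead_le_lookahead (hγ0 : 0 ≤ γ) (hγ1 : γ ≤ 1) {V : X → ℝ} (hV0 : 0 ≤ V)
    (hV1 : V ≤ 1) (oa : Option A) (a : A) (x : X) :
    augLookahead G P γ oa V x ≤ lookahead G P γ (oa.getD a) V x := by
  have hE : 0 ≤ pexp (P x (oa.getD a)) V := le_pexp _ hV0
  cases oa <;> simp only [augLookahead, lookahead, Option.getD_none, Option.getD_some] at hE ⊢
  · split_ifs
    · rfl
    · exact mul_nonneg hγ0 hE
  · split_ifs
    · exact mul_le_one₀ hγ1 hE (pexp_le _ hV1)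
    · rfl

variable [Fintype A]

lemma polBellman_lookahead_bounds (hγ0 : 0 ≤ γ) (hγ1 : γ < 1) {π : X → PMF A} {V : X → ℝ}
    (hV : polBellman π (lookahead G P γ) V = V) : 0 ≤ V ∧ V ≤ 1 := by
  have hT := IsBlackwell.polBellman π (isBlackwell_lookahead G P hγ0)
  refine ⟨hT.comparison hγ1 (V := fun _ => 0) (fun x => le_pexp _ fun a => ?_) hV.le,
    hT.comparison hγ1 (W := fun _ => 1) hV.ge (fun x => pexp_le _ fun a => ?_)⟩
  · simp only [lookahead]
    split_ifs
    · exact zero_le_one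
    · rw [pexp_const, mul_zero]
  · simp only [lookahead]
    split_ifs
    · rfl
    · rw [pexp_const, mul_one]
      exact hγ1.le

variable [Nonempty A]

lemma optBellman_lookahead_bounds (hγ0 : 0 ≤ γ) (hγ1 : γ < 1) {V : X → ℝ}
    (hV : optBellman (lookahead G P γ) V = V) : 0 ≤ V ∧ V ≤ 1 := by
  have hT := IsBlackwell.optBellman (isBlackwell_lookahead G P hγ0)
  refine ⟨hT.comparison hγ1 (V := fun _ => 0) (fun x => ?_) hV.le,
    hT.comparison hγ1 (W := fun _ => 1) hV.ge (fun x => ?_)⟩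
  · refine le_trans ?_ (le_optBellman _ (Classical.arbitrary A) _ x)
    simp only [lookahead]
    split_ifs
    · exact zero_le_one
    · rw [pexp_const, mul_zero]
  · refine ciSup_le fun a => ?_
    simp only [lookahead]
    split_ifs
    · rfl
    · rw [pexp_const, mul_one]
      exact hγ1.le

lemma optBellman_augLookahead_of_fixed (hγ0 : 0 ≤ γ) (hγ1 : γ < 1) {V : X → ℝ}
    (hV : optBellman (lookahead G P γ) V = V) : optBellman (augLookahead G P γ) V = V := by
  obtain ⟨hV0, hV1⟩ := optBellman_lookahead_bounds hγ0 hγ1 hV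
  refine le_antisymm (fun x => ciSup_le fun oa => ?_) (fun x => ?_)
  · calc augLookahead G P γ oa V x
        ≤ lookahead G P γ (oa.getD (Classical.arbitrary A)) V x :=
          augLookahead_le_lookahead hγ0 hγ1.le hV0 hV1 _ _ x
      _ ≤ optBellman (lookahead G P γ) V x := le_optBellman _ _ V x
      _ = V x := congrFun hV x
  · calc V x = optBellman (lookahead G P γ) V x := (congrFun hV x).symm
      _ ≤ optBellman (augLookahead G P γ) V x := ciSup_le fun a =>
          (lookahead_eq_augLookahead a V x).trans_le (le_optBellman _ _ V x)

lemma polBellman_augLookahead_le (hγ0 : 0 ≤ γ) (hγ1 : γ < 1) {ξ : Option X → PMF (Option A)}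
    {ξr : X → PMF A}
    (hres : ∀ x a, ξr x a = ξ (some x) (some a) + ξ (some x) none / (Fintype.card A : ℝ≥0∞))
    {V : X → ℝ} (hV : polBellman ξr (lookahead G P γ) V = V) :
    polBellman (fun x => ξ (some x)) (augLookahead G P γ) V ≤ V := by
  obtain ⟨hV0, hV1⟩ := polBellman_lookahead_bounds hγ0 hγ1 hV
  intro x
  refine (pexp_le_pexp_of_restrict (hres x) (fun a => ?_) (fun a => ?_)).trans_eq (congrFun hV x)
  · exact augLookahead_le_lookahead hγ0 hγ1.le hV0 hV1 none a x
  · exact augLookahead_le_lookahead hγ0 hγ1.le hV0 hV1 (some a) a x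

end GoalMDP

section AugmentedMDP

variable {X A : Type*} {G : Set X} {P : X → A → PMF X} {γ : ℝ}

lemma augR_add_augP_none (W : Option X → ℝ) (oa : Option A) :
    augR G none oa + γ * pexp (augP P none oa) W = γ * W none := by
  cases oa <;> simp [augR, augP, pexp_pure]

lemma augR_add_augP_some [Fintype X] {W : Option X → ℝ} (hW : W none = 0) (x : X)
    (oa : Option A) :
    augR G (some x) oa + γ * pexp (augP P (some x) oa) W =
      augLookahead G P γ oa (fun x => W (some x)) x := by
  cases oa <;> simp [augR, augP, augLookahead, pexp_pure, pexp_map_some, hW]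

variable [Fintype X]

lemma optBellman_augLookahead_augValue (hγ1 : γ < 1) {Q : Option X → Option A → ℝ}
    (hQ : ∀ ox oa, Q ox oa =
      augR G ox oa + γ * pexp (augP P ox oa) (fun ox' => ⨆ oa' : Option A, Q ox' oa')) :
    optBellman (augLookahead G P γ) (fun x => ⨆ oa, Q (some x) oa) =
      fun x => ⨆ oa, Q (some x) oa := by
  have hnone : ⨆ oa, Q none oa = 0 := by
    refine eq_zero_of_mul_eq_self_left hγ1.ne ?_
    calc γ * ⨆ oa, Q none oa = ⨆ _ : Option A, γ * ⨆ oa, Q none oa := ciSup_const.symm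
      _ = ⨆ oa, Q none oa := iSup_congr fun oa => by rw [hQ none oa, augR_add_augP_none]
  exact funext fun x => iSup_congr fun oa =>
    ((hQ (some x) oa).trans (augR_add_augP_some (W := fun ox => ⨆ oa, Q ox oa) hnone x oa)).symm

lemma polBellman_augLookahead_augValue (hγ1 : γ < 1) {ξ : Option X → PMF (Option A)}
    {Q : Option X → Option A → ℝ}
    (hQ : ∀ ox oa, Q ox oa =
      augR G ox oa + γ * pexp (augP P ox oa) (fun ox' => pexp (ξ ox') (Q ox'))) :
    polBellman (fun x => ξ (some x)) (augLookahead G P γ) (fun x => pexp (ξ (some x)) (Q (some x)))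
      = fun x => pexp (ξ (some x)) (Q (some x)) := by
  have hnone : pexp (ξ none) (Q none) = 0 := by
    refine eq_zero_of_mul_eq_self_left hγ1.ne ?_
    calc γ * pexp (ξ none) (Q none) = pexp (ξ none) (fun _ => γ * pexp (ξ none) (Q none)) :=
          (pexp_const _ _).symm
      _ = pexp (ξ none) (Q none) :=
          congrArg _ <| funext fun oa => by rw [hQ none oa, augR_add_augP_none]
  exact funext fun x => congrArg (pexp _) <| funext fun oa =>
    ((hQ (some x) oa).trans
      (augR_add_augP_some (W := fun ox => pexp (ξ ox) (Q ox)) hnone x oa)).symm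

end AugmentedMDP

/-- Restriction preserves the regret bound: for any policy `ξ` on the
augmented MDP with restriction `ξ̲ = ξr` to the original MDP (redistributing the mass on
the fictitious action uniformly over real actions), the regret of `ξ̲` in the original
goal-oriented MDP is at most the regret of `ξ` in the augmented MDP:
`V*(d₀) − V^{ξ̲}(d₀) ≤ V̄*(d₀) − V̄^{ξ}(d₀)`. Optimal values and policy values are
characterized by their Bellman equations. -/
theorem stmt19 {X A : Type*} [Fintype X] [Fintype A] [Nonempty A]
    (G : Set X) (P : X → A → PMF X) (d0 : PMF X)
    (γ : ℝ) (hγ0 : 0 ≤ γ) (hγ1 : γ < 1)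
    (ξ : Option X → PMF (Option A)) (ξr : X → PMF A)
    (hres : ∀ x a, ξr x a =
      ξ (some x) (some a) + ξ (some x) none / (Fintype.card A : ℝ≥0∞))
    (Qstar : X → A → ℝ)
    (hQstar : ∀ x a, Qstar x a =
      if x ∈ G then 1 else γ * pexp (P x a) (fun x' => ⨆ a' : A, Qstar x' a'))
    (Qbstar : Option X → Option A → ℝ)
    (hQbstar : ∀ ox oa, Qbstar ox oa =
      augR G ox oa + γ * pexp (augP P ox oa) (fun ox' => ⨆ oa' : Option A, Qbstar ox' oa'))
    (Qr : X → A → ℝ)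
    (hQr : ∀ x a, Qr x a =
      if x ∈ G then 1 else γ * pexp (P x a) (fun x' => pexp (ξr x') (Qr x')))
    (Qξ : Option X → Option A → ℝ)
    (hQξ : ∀ ox oa, Qξ ox oa =
      augR G ox oa + γ * pexp (augP P ox oa) (fun ox' => pexp (ξ ox') (Qξ ox'))) :
    pexp d0 (fun x => ⨆ a : A, Qstar x a) - pexp d0 (fun x => pexp (ξr x) (Qr x))
      ≤ pexp (d0.map some) (fun ox => ⨆ oa : Option A, Qbstar ox oa)
        - pexp (d0.map some) (fun ox => pexp (ξ ox) (Qξ ox)) := by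
  set Vs : X → ℝ := fun x => ⨆ a, Qstar x a
  set Vr : X → ℝ := fun x => pexp (ξr x) (Qr x)
  have hVs : optBellman (lookahead G P γ) Vs = Vs :=
    funext fun x => iSup_congr fun a => (hQstar x a).symm
  have hVr : polBellman ξr (lookahead G P γ) Vr = Vr :=
    funext fun x => congrArg (pexp _) <| funext fun a => (hQr x a).symm
  have hVb := optBellman_augLookahead_augValue hγ1 hQbstar
  have hVξ := polBellman_augLookahead_augValue hγ1 hQξ
  have hTb := IsBlackwell.optBellman (isBlackwell_augLookahead G P hγ0)
  have hTξ := IsBlackwell.polBellman (fun x => ξ (some x)) (isBlackwell_augLookahead G P hγ0)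
  have hVsb := optBellman_augLookahead_of_fixed hγ0 hγ1 hVs
  have hopt : (fun x => ⨆ oa, Qbstar (some x) oa) = Vs :=
    le_antisymm (hTb.comparison hγ1 hVb.ge hVsb.le) (hTb.comparison hγ1 hVsb.ge hVb.le)
  have hpol : (fun x => pexp (ξ (some x)) (Qξ (some x))) ≤ Vr :=
    hTξ.comparison hγ1 hVξ.ge (polBellman_augLookahead_le hγ0 hγ1 hres hVr)
  rw [pexp_map_some, pexp_map_some, hopt]
  linarith [pexp_mono d0 hpol]
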